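/- arXiv:2506.15893 — 2 statements merged into one kernel-verified Lean document; each statement's English description precedes it below -/
import Mathlib

section
/- For every m ≥ 3, S^d_min(DL²_m) ≥ 2^{m−2} − 1, where DL²_m is the class of Boolean functions over {0,1}^m representable by 1-decision lists with at most 2 label alternations and d is the Hamming distance. -/
open scoped NNReal

/-- The interaction game for learning from a contrast oracle:
`Identifiable pt CS n V` holds iff the learner can guarantee, within at most `n` rounds,
that the version space (starting from `V`) becomes a singleton `{C*}` (i.e. a subsingleton,
since the target always stays in the version space), against every target `C* ∈ V` and
every adversarial choice of contrastive examples from the contrast set `CS`.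
A query has type `Q`; `pt q` is the instance whose label is returned; `CS q C V` is the
contrast set of the query `q` w.r.t. concept `C` and current version space `V`. -/
def Identifiable {X Q : Type*} (pt : Q → X)
    (CS : Q → (X → Bool) → Set (X → Bool) → Set X) :
    ℕ → Set (X → Bool) → Prop
  | 0, V => V.Subsingleton
  | n + 1, V =>
      V.Subsingleton ∨
        ∃ q : Q, ∀ Cstar ∈ V,
          ((CS q Cstar V = ∅ →
            Identifiable pt CS n
              {C ∈ V | C (pt q) = Cstar (pt q) ∧ CS q C V = ∅}) ∧
          (∀ x' ∈ CS q Cstar V,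
            Identifiable pt CS n
              {C ∈ V | C (pt q) = Cstar (pt q) ∧ x' ∈ CS q C V ∧ C x' = Cstar x'}))

/-- The contrast sample complexity of class `𝓒` (as an extended natural number):
the least `n` such that some learner identifies every target within `n` rounds. -/
noncomputable def sampleComplexity {X Q : Type*} (pt : Q → X)
    (CS : Q → (X → Bool) → Set (X → Bool) → Set X) (𝓒 : Set (X → Bool)) : ℕ∞ :=
  sInf {n : ℕ∞ | ∃ k : ℕ, n = (k : ℕ∞) ∧ Identifiable pt CS k 𝓒}

/-- Minimum-distance contrast set: points of opposite label at minimal `d`-distance. -/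
def CSmin {X : Type*} (d : X → X → ℝ≥0) (x : X) (C : X → Bool) : Set X :=
  {x' | C x' ≠ C x ∧ ∀ x'' : X, C x'' ≠ C x → d x x' ≤ d x x''}

/-- Sample complexity in the minimum-distance model. -/
noncomputable def Smin {X : Type*} (d : X → X → ℝ≥0) (𝓒 : Set (X → Bool)) : ℕ∞ :=
  sampleComplexity (id : X → X) (fun x C _ => CSmin d x C) 𝓒

/-- Proximity contrast set: points of opposite label within distance `r` of `x`. -/
def CSprox {X : Type*} (d : X → X → ℝ≥0) (x : X) (r : ℝ≥0) (C : X → Bool) : Set X :=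
  {x' | C x' ≠ C x ∧ d x x' ≤ r}

/-- Sample complexity in the proximity model (queries are pairs `(x, r)`). -/
noncomputable def Sprox {X : Type*} (d : X → X → ℝ≥0) (𝓒 : Set (X → Bool)) : ℕ∞ :=
  sampleComplexity (Prod.fst : X × ℝ≥0 → X) (fun q C _ => CSprox d q.1 q.2 C) 𝓒

/-- Membership-query complexity: the contrast sets are always empty,
so the oracle only ever returns the label of the queried point. -/
noncomputable def SMQ {X : Type*} (𝓒 : Set (X → Bool)) : ℕ∞ :=
  sampleComplexity (id : X → X) (fun _ _ _ => (∅ : Set X)) 𝓒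

/-- Evaluation of a 1-decision list.  An item `((i, p), b)` stands for the pair
`(ℓ, b)` where the literal `ℓ` is `v_i` if `p = true` and `¬v_i` if `p = false`;
the final `Bool` is the default label `b_{z+1}`. -/
def evalDL {m : ℕ} : List ((Fin m × Bool) × Bool) → Bool → (Fin m → Bool) → Bool
  | [], bd, _ => bd
  | item :: rest, bd, a => if a item.1.1 = item.1.2 then item.2 else evalDL rest bd a

/-- The number of label alternations in a list of labels: the number of adjacent
unequal pairs. -/
def countAlt : List Bool → ℕ
  | a :: b :: rest => (if a ≠ b then 1 else 0) + countAlt (b :: rest)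
  | _ => 0

/-- `DL^k_m`: Boolean functions over `{0,1}^m` representable by a 1-decision list in
which every variable occurs at most once and with at most `k` label alternations
(counted over the labels `b_1, …, b_z, b_{z+1}` including the default). -/
def DLk (m k : ℕ) : Set ((Fin m → Bool) → Bool) :=
  {C | ∃ (items : List ((Fin m × Bool) × Bool)) (bd : Bool),
    (items.map fun t => t.1.1).Nodup ∧
    countAlt (items.map Prod.snd ++ [bd]) ≤ k ∧
    C = evalDL items bd}

/-! For `b ∈ {0,1}^{m-1}` let `C_b` be the half-cube `{x | x₀ = 1}` together with the point
`(0, b)`; it is the decision list `[(v₀, 1), (v₁ ≠ b₁, 0), …, (v_{m-1} ≠ b_{m-1}, 0), 1]`, with two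
label alternations. Whatever point `x` is queried, flipping `x₀` gives a point at Hamming
distance 1 whose label is opposite under every `C_b` with `b ≠ tail x`, so answering with it is
consistent with all of these concepts. Each round thus removes at most one of the `2^{m-1}`
candidates `C_b` from the version space. -/

section Adversary

variable {X Q : Type*} (pt : Q → X) (CS : Q → (X → Bool) → Set X)

/-- The oracle can answer the query `q` by `(y, x', y')` without ruling out any member of `S`
other than `e`. -/
def IsEvasive (S : Finset (X → Bool)) : Prop :=
  ∀ q : Q, ∃ (e : X → Bool) (y : Bool) (x' : X) (y' : Bool),
    ∀ C ∈ S, C ≠ e → C (pt q) = y ∧ x' ∈ CS q C ∧ C x' = y'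

variable {pt CS}

theorem IsEvasive.mono {S T : Finset (X → Bool)} (hS : IsEvasive pt CS S) (hT : T ⊆ S) :
    IsEvasive pt CS T := fun q => by
  obtain ⟨e, y, x', y', he⟩ := hS q
  exact ⟨e, y, x', y', fun C hC => he C (hT hC)⟩

theorem Identifiable.card_le_of_isEvasive [DecidableEq (X → Bool)] {k : ℕ}
    {V : Set (X → Bool)} {S : Finset (X → Bool)}
    (hid : Identifiable pt (fun q C _ => CS q C) k V) (hSV : ↑S ⊆ V)
    (hS : IsEvasive pt CS S) : S.card ≤ k + 1 := by
  induction k generalizing V S with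
  | zero => exact Finset.card_le_one.2 fun C hC C' hC' => hid (hSV hC) (hSV hC')
  | succ k ih =>
    obtain hsub | ⟨q, hq⟩ := hid
    · have := Finset.card_le_one.2 fun C hC C' hC' => hsub (hSV hC) (hSV hC')
      omega
    obtain ⟨e, y, x', y', he⟩ := hS q
    have hT : (S.erase e).card ≤ k + 1 := by
      obtain hempty | ⟨C, hC⟩ := (S.erase e).eq_empty_or_nonempty
      · simp [hempty]
      obtain ⟨hCe, hCS⟩ := Finset.mem_erase.1 hC
      obtain ⟨hCq, hx', hCx'⟩ := he C hCS hCe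
      refine ih ((hq C (hSV hCS)).2 x' hx') (fun C' hC' => ?_) (hS.mono (S.erase_subset e))
      obtain ⟨hC'e, hC'S⟩ := Finset.mem_erase.1 hC'
      obtain ⟨hC'q, hx'', hC'x'⟩ := he C' hC'S hC'e
      exact ⟨hSV hC'S, hC'q.trans hCq.symm, hx'', hC'x'.trans hCx'.symm⟩
    have := S.pred_card_le_card_erase (a := e)
    omega

theorem le_sampleComplexity_of_isEvasive {𝓒 : Set (X → Bool)} {S : Finset (X → Bool)}
    (hS𝓒 : ↑S ⊆ 𝓒) (hS : IsEvasive pt CS S) :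
    ((S.card - 1 : ℕ) : ℕ∞) ≤ sampleComplexity pt (fun q C _ => CS q C) 𝓒 := by
  classical
  refine le_sInf ?_
  rintro _ ⟨k, rfl, hk⟩
  have := hk.card_le_of_isEvasive hS𝓒 hS
  exact_mod_cast (by omega : S.card - 1 ≤ k)

end Adversary

section Hamming

variable {ι β : Type*} [Fintype ι] [DecidableEq β]

theorem mem_CSmin_hammingDist_of_le_one {C : (ι → β) → Bool} {x x' : ι → β}
    (hC : C x' ≠ C x) (hd : hammingDist x x' ≤ 1) :
    x' ∈ CSmin (fun a b => ((hammingDist a b : ℕ) : ℝ≥0)) x C := by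
  refine ⟨hC, fun x'' hx'' => ?_⟩
  have hpos : 0 < hammingDist x x'' := hammingDist_pos.2 fun h => hx'' (h ▸ rfl)
  change ((hammingDist x x' : ℕ) : ℝ≥0) ≤ hammingDist x x''
  exact_mod_cast (by omega : hammingDist x x' ≤ hammingDist x x'')

end Hamming

theorem hammingDist_cons_cons_le_one {n : ℕ} {β : Type*} [DecidableEq β] (c c' : β)
    (t : Fin n → β) : hammingDist (Fin.cons c t : Fin (n + 1) → β) (Fin.cons c' t) ≤ 1 := by
  set x : Fin (n + 1) → β := Fin.cons c t
  set x' : Fin (n + 1) → β := Fin.cons c' t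
  have eq_zero_of_ne (i : Fin (n + 1)) (hi : x i ≠ x' i) : i = 0 := by
    cases i using Fin.cases with
    | zero => rfl
    | succ i => simp [x, x'] at hi
  refine Finset.card_le_one.2 fun i hi j hj => ?_
  rw [eq_zero_of_ne i (Finset.mem_filter.1 hi).2, eq_zero_of_ne j (Finset.mem_filter.1 hj).2]

theorem countAlt_cons_replicate_append (a b : Bool) (k : ℕ) :
    countAlt (a :: (List.replicate k a ++ [b])) = if a ≠ b then 1 else 0 := by
  induction k with
  | zero => simp [countAlt]
  | succ k ih => simpa [List.replicate_succ, countAlt] using ih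

theorem evalDL_map_false_true {m : ℕ} {ι : Type*} (l : List ι) (lit : ι → Fin m × Bool)
    (x : Fin m → Bool) :
    evalDL (l.map fun i => (lit i, false)) true x =
      decide (∀ i ∈ l, x (lit i).1 ≠ (lit i).2) := by
  induction l with
  | nil => rfl
  | cons i l ih => by_cases h : x (lit i).1 = (lit i).2 <;> simp [evalDL, h, ih]

section HalfCube

variable {n : ℕ}

def halfCubeAndPoint (b : Fin n → Bool) (x : Fin (n + 1) → Bool) : Bool :=
  x 0 || decide (Fin.tail x = b)

theorem halfCubeAndPoint_cons_of_ne {b t : Fin n → Bool} (c : Bool) (h : t ≠ b) :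
    halfCubeAndPoint b (Fin.cons c t) = c := by
  simp [halfCubeAndPoint, h]

theorem halfCubeAndPoint_injective : Function.Injective (halfCubeAndPoint (n := n)) := by
  intro b b' h
  simpa [halfCubeAndPoint] using congrFun h (Fin.cons false b)

theorem halfCubeAndPoint_mem_DLk (b : Fin n → Bool) : halfCubeAndPoint b ∈ DLk (n + 1) 2 := by
  refine ⟨((0, true), true) :: (List.finRange n).map (fun i => ((i.succ, !b i), false)), true,
    ?nodup, ?alternations, ?eval⟩
  case nodup =>
    simp only [List.map_cons, List.map_map, Function.comp_def]
    exact List.nodup_cons.2 ⟨by simp [Fin.succ_ne_zero],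
      (List.nodup_finRange n).map (Fin.succ_injective n)⟩
  case alternations =>
    cases n with
    | zero => simp [countAlt]
    | succ k =>
      simp only [List.map_cons, List.map_map, Function.comp_def, List.map_const',
        List.length_finRange]
      simp [List.replicate_succ, countAlt, countAlt_cons_replicate_append]
  case eval =>
    funext x
    rw [evalDL, evalDL_map_false_true]
    by_cases hx : x 0 <;> simp [halfCubeAndPoint, hx, funext_iff, Fin.tail]

theorem isEvasive_halfCubeAndPoint :
    IsEvasive id (CSmin fun a b => ((hammingDist a b : ℕ) : ℝ≥0))
      (Finset.univ.image (halfCubeAndPoint (n := n))) := by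
  intro q
  refine ⟨halfCubeAndPoint (Fin.tail q), q 0, Fin.cons (!q 0) (Fin.tail q), !q 0, ?_⟩
  simp only [Finset.mem_image, Finset.mem_univ, true_and, forall_exists_index]
  rintro _ b rfl hb
  have htail : Fin.tail q ≠ b := fun h => hb (h ▸ rfl)
  have hq : halfCubeAndPoint b q = q 0 := by
    rw [← Fin.cons_self_tail q, halfCubeAndPoint_cons_of_ne _ htail, Fin.cons_zero]
  have hflip : halfCubeAndPoint b (Fin.cons (!q 0) (Fin.tail q)) = !q 0 :=
    halfCubeAndPoint_cons_of_ne _ htail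
  refine ⟨hq, mem_CSmin_hammingDist_of_le_one (by simp [hq, hflip]) ?_, hflip⟩
  simpa [Fin.cons_self_tail] using hammingDist_cons_cons_le_one (q 0) (!q 0) (Fin.tail q)

end HalfCube

theorem two_pow_sub_one_le_Smin_DLk (n : ℕ) :
    ((2 ^ n - 1 : ℕ) : ℕ∞) ≤
      Smin (fun a b => ((hammingDist a b : ℕ) : ℝ≥0)) (DLk (n + 1) 2) := by
  have hcard : (Finset.univ.image (halfCubeAndPoint (n := n))).card = 2 ^ n := by
    simp [Finset.card_image_of_injective _ halfCubeAndPoint_injective]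
  have hDL : ↑(Finset.univ.image (halfCubeAndPoint (n := n))) ⊆ DLk (n + 1) 2 := by
    simpa [Set.subset_def] using halfCubeAndPoint_mem_DLk
  exact hcard ▸ le_sampleComplexity_of_isEvasive hDL isEvasive_halfCubeAndPoint

theorem statement15_general (m : ℕ) :
    ((2 ^ (m - 2) - 1 : ℕ) : ℕ∞) ≤ Smin (fun a b => ((hammingDist a b : ℕ) : ℝ≥0)) (DLk m 2) := by
  obtain _ | n := m
  · simp
  · refine le_trans ?_ (two_pow_sub_one_le_Smin_DLk n)
    gcongr
    · norm_num
    · omega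

/-- For every `m ≥ 3`,
`S^d_min(DL²_m) ≥ 2^{m−2} − 1`, with `d` the Hamming distance. -/
theorem statement15 (m : ℕ) (hm : 3 ≤ m) :
    ((2 ^ (m - 2) - 1 : ℕ) : ℕ∞) ≤ Smin (fun a b => ((hammingDist a b : ℕ) : ℝ≥0)) (DLk m 2) :=
  statement15_general m
end

section
/- Let m, s, z ≥ 1 and let 𝒞 be the class of Boolean functions f : {0,1}^m → {0,1} expressible as a disjunction f = M_1 ∨ … ∨ M_s of s monotone monomials, each M_i nonempty and a conjunction of at most z unnegated variables. In the dynamic minimum-distance model, where the contrast set in round t is the minimum-distance contrast set with respect to the version-space distance d_{𝒞_t}(x, x') = |{ C ∈ 𝒞_t : C(x) ≠ C(x') }| / |𝒞_t| (𝒞_t being the version space entering round t), the contrast sample complexity of 𝒞 is at most s. -/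
open scoped NNReal

/-- `MDNF` with nonempty monomials: Boolean functions over `{0,1}^m` expressible as a
disjunction of `s` monotone monomials, each nonempty and with at most `z` variables. -/
def MDNFne (m s z : ℕ) : Set ((Fin m → Bool) → Bool) :=
  {f | ∃ M : Fin s → Finset (Fin m), (∀ i, (M i).Nonempty ∧ (M i).card ≤ z) ∧
    f = fun b => decide (∃ i, ∀ j ∈ M i, b j = true)}

/-- The version-space distance: `d_V(x, x')` is the fraction of concepts of `V` that
label `x` and `x'` differently. -/
noncomputable def dVS {X : Type*} (V : Set (X → Bool)) (x x' : X) : ℝ≥0 :=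
  (({C ∈ V | C x ≠ C x'}).ncard : ℝ≥0) / (V.ncard : ℝ≥0)

/-- Sample complexity in the dynamic minimum-distance model: in each round the
contrast set is the minimum-distance contrast set w.r.t. the distance `dVS V`
induced by the current version space `V`. -/
noncomputable def SminDyn {X : Type*} (𝓒 : Set (X → Bool)) : ℕ∞ :=
  sampleComplexity (id : X → X) (fun x C V => CSmin (dVS V) x C) 𝓒

/-!
The learner queries `⊥` in every round. All concepts vanish there, so `d_V(⊥, x)` is
proportional to the number of concepts of `V` positive at `x`, and the oracle answers with a
positive point `x'` of the target that lies in as few concepts of `V` as possible. Every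
surviving concept `C` has `x'` as such a minimiser too, and `x'` lies above a generator `g` of
`C` (the indicator of one of its monomials). By monotonicity `V` is positive at `g` exactly where
it is positive at `x'`, so the new version space is positive at `g`. Hence the number of
generators of `C` at which some concept of the version space is negative drops by at least
one per round: either `g` was such a generator, or the count was already zero. When no
such generator is left, every surviving concept lies pointwise below every other.
-/

theorem identifiable_of_subsingleton {X Q : Type*} (pt : Q → X)
    (CS : Q → (X → Bool) → Set (X → Bool) → Set X) :
    ∀ (n : ℕ) (V : Set (X → Bool)), V.Subsingleton → Identifiable pt CS n V
  | 0, _, h => h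
  | _ + 1, _, h => Or.inl h

section UpperGenerated

variable {X ι : Type*} [PartialOrder X]

open Classical in
noncomputable def upGen (g : ι → X) : X → Bool := fun x => decide (∃ i, g i ≤ x)

theorem upGen_eq_true {g : ι → X} {x : X} : upGen g x = true ↔ ∃ i, g i ≤ x := by
  simp [upGen]

theorem monotone_upGen (g : ι → X) : Monotone (upGen g) := fun x y hxy => by
  simp only [Bool.le_iff_imp, upGen_eq_true]
  exact fun ⟨i, hi⟩ => ⟨i, hi.trans hxy⟩

theorem upGen_bot [OrderBot X] {g : ι → X} (hg : ∀ i, g i ≠ ⊥) : upGen g ⊥ = false := by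
  simpa [upGen, le_bot_iff] using hg

theorem upGen_le {g : ι → X} {D : X → Bool} (hD : Monotone D) (h : ∀ i, D (g i) = true) :
    upGen g ≤ D := fun x => by
  simp only [Bool.le_iff_imp, upGen_eq_true]
  exact fun ⟨i, hi⟩ => Bool.le_iff_imp.mp (hD hi) (h i)

end UpperGenerated

section VersionSpace

variable {X ι : Type*}

def posSet (V : Set (X → Bool)) (x : X) : Set (X → Bool) := {C ∈ V | C x = true}

def uncovered (V : Set (X → Bool)) (g : ι → X) : Set ι := {i | ∃ C ∈ V, C (g i) = false}

theorem notMem_uncovered_iff {V : Set (X → Bool)} {g : ι → X} {i : ι} :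
    i ∉ uncovered V g ↔ posSet V (g i) = V := by
  simp [uncovered, posSet, Set.sep_eq_self_iff_mem_true]

theorem uncovered_mono {V W : Set (X → Bool)} (hWV : W ⊆ V) (g : ι → X) :
    uncovered W g ⊆ uncovered V g := fun _ ⟨C, hC, hCi⟩ => ⟨C, hWV hC, hCi⟩

theorem posSet_mono [Preorder X] {V : Set (X → Bool)} (hV : ∀ C ∈ V, Monotone C) {x y : X}
    (hxy : x ≤ y) : posSet V x ⊆ posSet V y := fun C ⟨hCV, hCx⟩ =>
  ⟨hCV, Bool.le_iff_imp.mp (hV C hCV hxy) hCx⟩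

theorem dVS_eq_of_forall_eq_false {V : Set (X → Bool)} {x₀ : X} (h0 : ∀ C ∈ V, C x₀ = false)
    (x : X) : dVS V x₀ x = ((posSet V x).ncard : ℝ≥0) / (V.ncard : ℝ≥0) := by
  have hset : {C ∈ V | C x₀ ≠ C x} = posSet V x := by
    refine Set.sep_ext_iff.mpr fun C hCV => ?_
    rw [h0 C hCV, ne_comm, ne_eq, Bool.not_eq_false]
  rw [dVS, hset]

theorem mem_CSmin_dVS_iff [Finite X] {V : Set (X → Bool)} {x₀ : X}
    (h0 : ∀ C ∈ V, C x₀ = false) (hV : V.Nonempty) {C : X → Bool} (hC : C x₀ = false)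
    {x' : X} :
    x' ∈ CSmin (dVS V) x₀ C ↔
      C x' = true ∧ ∀ y, C y = true → (posSet V x').ncard ≤ (posSet V y).ncard := by
  have hpos : (0 : ℝ≥0) < V.ncard := Nat.cast_pos.mpr ((Set.ncard_pos).mpr hV)
  simp only [CSmin, Set.mem_ofPred_eq, hC, ne_eq, Bool.not_eq_false,
    dVS_eq_of_forall_eq_false h0, div_le_div_iff_of_pos_right hpos, Nat.cast_le]

theorem eq_const_of_CSmin_eq_empty [Finite X] (d : X → X → ℝ≥0) {x : X} {C : X → Bool}
    (h : CSmin d x C = ∅) : C = fun _ => C x := by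
  by_contra hC
  obtain ⟨x₁, hx₁⟩ : ∃ x₁, C x₁ ≠ C x := by simpa [funext_iff] using hC
  obtain ⟨x', hx', hmin⟩ :=
    Set.exists_min_image {x' | C x' ≠ C x} (d x) (Set.toFinite _) ⟨x₁, hx₁⟩
  exact (Set.eq_empty_iff_forall_notMem.mp h) x' ⟨hx', fun x'' hx'' => hmin x'' hx''⟩

theorem le_of_uncovered_eq_empty [PartialOrder X] {V : Set (X → Bool)}
    (hV : ∀ C ∈ V, Monotone C) {g : ι → X} (h : uncovered V g = ∅) {D : X → Bool}
    (hD : D ∈ V) : upGen g ≤ D :=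
  upGen_le (hV D hD) fun i =>
    ((notMem_uncovered_iff.mp (h ▸ Set.notMem_empty i)).symm ▸ hD : D ∈ posSet V (g i)).2

end VersionSpace

section Learning

variable {X ι : Type*} [PartialOrder X] [Finite X] [Finite ι]

theorem ncard_uncovered_le_of_minimal {V W : Set (X → Bool)} (hV : ∀ C ∈ V, Monotone C)
    {g : ι → X} {x' : X} {n : ℕ} (hg : (uncovered V g).ncard ≤ n + 1)
    (hx' : upGen g x' = true)
    (hmin : ∀ y, upGen g y = true → (posSet V x').ncard ≤ (posSet V y).ncard)
    (hWV : W ⊆ V) (hW : ∀ C ∈ W, C x' = true) : (uncovered W g).ncard ≤ n := by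
  have hmin_gen : ∀ i, (posSet V x').ncard ≤ (posSet V (g i)).ncard :=
    fun i => hmin _ (upGen_eq_true.mpr ⟨i, le_rfl⟩)
  obtain ⟨i₀, hi₀⟩ := upGen_eq_true.mp hx'
  have hpos₀ : posSet V (g i₀) = posSet V x' :=
    Set.eq_of_subset_of_ncard_le (posSet_mono hV hi₀) (hmin_gen i₀)
  by_cases hi₀V : i₀ ∈ uncovered V g
  · have hsub : uncovered W g ⊆ uncovered V g \ {i₀} := by
      rintro i ⟨C, hCW, hCi⟩
      refine ⟨⟨C, hWV hCW, hCi⟩, ?_⟩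
      rintro rfl
      have hC : C ∈ posSet V (g i) := hpos₀ ▸ ⟨hWV hCW, hW C hCW⟩
      simp [hC.2] at hCi
    calc (uncovered W g).ncard ≤ (uncovered V g \ {i₀}).ncard := Set.ncard_le_ncard hsub
      _ = (uncovered V g).ncard - 1 := Set.ncard_sdiff_singleton_of_mem hi₀V
      _ ≤ n := by omega
  · -- `V` is positive at `g i₀`, hence at `x'`, hence by minimality at every generator.
    have hall₀ : posSet V x' = V := hpos₀ ▸ notMem_uncovered_iff.mp hi₀V
    have hcov : uncovered V g = ∅ := Set.eq_empty_of_forall_notMem fun i =>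
      notMem_uncovered_iff.mpr <| Set.eq_of_subset_of_ncard_le (Set.sep_subset _ _)
        (by simpa only [hall₀] using hmin_gen i)
    have hW0 : uncovered W g = ∅ := Set.subset_empty_iff.mp (hcov ▸ uncovered_mono hWV g)
    simp [hW0]

theorem identifiable_upGen [OrderBot X] (n : ℕ) (V : Set (X → Bool))
    (hV : ∀ C ∈ V, ∃ g : ι → X, (∀ i, g i ≠ ⊥) ∧ C = upGen g ∧ (uncovered V g).ncard ≤ n) :
    Identifiable (id : X → X) (fun x C V => CSmin (dVS V) x C) n V := by
  have hmono : ∀ C ∈ V, Monotone C := fun C hC => by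
    obtain ⟨g, -, rfl, -⟩ := hV C hC
    exact monotone_upGen g
  have hbot : ∀ C ∈ V, C ⊥ = false := fun C hC => by
    obtain ⟨g, hg, rfl, -⟩ := hV C hC
    exact upGen_bot hg
  cases n with
  | zero =>
    intro C hC C' hC'
    obtain ⟨g, -, rfl, hg⟩ := hV C hC
    obtain ⟨g', -, rfl, hg'⟩ := hV C' hC'
    exact le_antisymm
      (le_of_uncovered_eq_empty hmono ((Set.ncard_eq_zero).mp (Nat.le_zero.mp hg)) hC')
      (le_of_uncovered_eq_empty hmono ((Set.ncard_eq_zero).mp (Nat.le_zero.mp hg')) hC)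
  | succ n =>
    refine Or.inr ⟨⊥, fun Cstar hCstar => ⟨fun _ => ?_, fun x' hx' => ?_⟩⟩
    · refine identifiable_of_subsingleton _ _ _ _ fun C hC C' hC' => ?_
      rw [eq_const_of_CSmin_eq_empty _ hC.2.2, eq_const_of_CSmin_eq_empty _ hC'.2.2]
      have hCC' : C ⊥ = C' ⊥ := hC.2.1.trans hC'.2.1.symm
      rw [hCC']
    · have hCSmin : ∀ C ∈ V, ∀ {x'}, x' ∈ CSmin (dVS V) ⊥ C ↔
          C x' = true ∧ ∀ y, C y = true → (posSet V x').ncard ≤ (posSet V y).ncard :=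
        fun C hC => mem_CSmin_dVS_iff hbot ⟨Cstar, hCstar⟩ (hbot C hC)
      refine identifiable_upGen n _ fun C ⟨hCV, _, hCx', _⟩ => ?_
      obtain ⟨g, hg, rfl, hgn⟩ := hV _ hCV
      obtain ⟨hgx', hmin⟩ := (hCSmin _ hCV).mp hCx'
      refine ⟨g, hg, rfl, ncard_uncovered_le_of_minimal hmono hgn hgx' hmin
        (fun C hC => hC.1) fun C hC => ?_⟩
      rw [hC.2.2.2]
      exact ((hCSmin _ hCstar).mp hx').1

end Learning

theorem exists_upGen_of_mem_MDNFne {m s z : ℕ} {f : (Fin m → Bool) → Bool}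
    (hf : f ∈ MDNFne m s z) :
    ∃ g : Fin s → Fin m → Bool, (∀ i, g i ≠ ⊥) ∧ f = upGen g := by
  obtain ⟨M, hM, rfl⟩ := hf
  refine ⟨fun i j => decide (j ∈ M i), fun i hi => ?_, ?_⟩
  · obtain ⟨j, hj⟩ := (hM i).1
    simpa [hj] using congrFun hi j
  · funext b
    rw [Bool.eq_iff_iff, decide_eq_true_iff, upGen_eq_true]
    simp [Pi.le_def, Bool.le_iff_imp]

theorem statement18_general (m s z : ℕ) :
    SminDyn (MDNFne m s z) ≤ (s : ℕ∞) := by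
  refine sInf_le ⟨s, rfl, identifiable_upGen (ι := Fin s) s _ fun C hC => ?_⟩
  obtain ⟨g, hg, rfl⟩ := exists_upGen_of_mem_MDNFne hC
  exact ⟨g, hg, rfl, (Set.ncard_le_card _).trans_eq (Nat.card_fin s)⟩

/-- For `m, s, z ≥ 1`, the class of disjunctions of `s` nonempty
monotone monomials with at most `z` variables each has sample complexity at most `s`
in the dynamic minimum-distance model. -/
theorem statement18 (m s z : ℕ) (hm : 1 ≤ m) (hs : 1 ≤ s) (hz : 1 ≤ z) :
    SminDyn (MDNFne m s z) ≤ (s : ℕ∞) :=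
  statement18_general m s z
end
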